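/- arXiv:1505.00443 — 2 statements merged into one kernel-verified Lean document; each statement's English description precedes it below -/
import Mathlib

section
/- For every real number 0 < α < 1/(2e), there exist β > 1 and n₀ ∈ ℕ such that for every partition λ of n ≥ n₀ with max(λ₁, λ'₁) < αn, the number of standard Young tableaux of shape λ is at least β^n. -/
/-!
Let `r₀ ≥ r₁ ≥ ⋯` be the row lengths of `μ`. Cut each pair of rows `2t, 2t + 1` into
`⌊r_{2t+1} / 2⌋` full `2 × 2` blocks followed by the leftover cells. Numbering the pairs one after
the other, and inside a pair first the blocks from left to right, then the leftover cells row by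
row, gives a standard Young tableau for each choice of reading every block by rows or by columns;
so `f^μ ≥ 2^M`, where `M` is the number of blocks. Since `r_{2t+1} + r_{2t+2} ≤ 4⌊r_{2t+1}/2⌋ + 2`,
summing over the pairs gives `n ≤ 4M + λ₁ + λ'₁ < 4M + 2αn`, hence `f^μ ≥ (2 ^ ((1 - 2α) / 4)) ^ n`.
-/

/-- Hook length of the cell `(i, j)` (0-indexed) of a Young diagram. -/
def hook (μ : YoungDiagram) (i j : ℕ) : ℕ :=
  (μ.rowLen i - j) + (μ.colLen j - i) - 1

/-- The number of standard Young tableaux of shape `μ`. -/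
noncomputable def sytCard (μ : YoungDiagram) : ℕ :=
  Nat.card {T : μ.cells → Fin μ.card //
    Function.Bijective T ∧
    ∀ c d : μ.cells, (c : ℕ × ℕ).1 ≤ (d : ℕ × ℕ).1 → (c : ℕ × ℕ).2 ≤ (d : ℕ × ℕ).2 →
      c ≠ d → T c < T d}

open Finset

section KeyTableau

variable {β : Type*} [LinearOrder β] (μ : YoungDiagram) {key : ℕ × ℕ → β}

noncomputable def tableauOfKey (hkey : Function.Injective key) : μ.cells → Fin μ.card :=
  fun c => ((μ.cells.image key).orderIsoOfFin
    (card_image_of_injective _ hkey)).symm ⟨key c, mem_image_of_mem _ c.2⟩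

theorem tableauOfKey_lt_iff (hkey : Function.Injective key) {c d : μ.cells} :
    tableauOfKey μ hkey c < tableauOfKey μ hkey d ↔ key c < key d := by
  simp only [tableauOfKey, OrderIso.lt_iff_lt, Subtype.mk_lt_mk]

theorem tableauOfKey_bijective (hkey : Function.Injective key) :
    Function.Bijective (tableauOfKey μ hkey) := by
  refine (Fintype.bijective_iff_injective_and_card _).2 ⟨fun c d h => ?_, by simp⟩
  exact Subtype.ext (hkey (congrArg Subtype.val ((OrderIso.injective _) h)))

theorem tableauOfKey_ne {key' : ℕ × ℕ → β} (hkey : Function.Injective key)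
    (hkey' : Function.Injective key') {c d : μ.cells} (h : key c < key d) (h' : key' d < key' c) :
    tableauOfKey μ hkey ≠ tableauOfKey μ hkey' := by
  intro hT
  have hlt := (tableauOfKey_lt_iff μ hkey).2 h
  rw [hT] at hlt
  exact lt_asymm hlt ((tableauOfKey_lt_iff μ hkey').2 h')

end KeyTableau

theorem card_le_sytCard {ι β : Type*} [LinearOrder β] (μ : YoungDiagram) (S : Finset ι)
    (key : ι → ℕ × ℕ → β) (hinj : ∀ i, Function.Injective (key i))
    (hmono : ∀ i, StrictMono (key i))
    (hsep : ∀ i ∈ S, ∀ j ∈ S, i ≠ j →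
      ∃ c ∈ μ, ∃ d ∈ μ, key i c < key i d ∧ key j d < key j c) :
    S.card ≤ sytCard μ := by
  rw [← Nat.card_eq_finsetCard]
  refine Nat.card_le_card_of_injective (fun i : S => ⟨tableauOfKey μ (hinj i),
    tableauOfKey_bijective μ (hinj i), fun c d h₁ h₂ hne => ?_⟩) ?_
  · exact (tableauOfKey_lt_iff μ _).2 <|
      hmono i (lt_of_le_of_ne (Prod.mk_le_mk.2 ⟨h₁, h₂⟩) (Subtype.coe_injective.ne hne))
  · rintro ⟨i, hi⟩ ⟨j, hj⟩ hij
    by_contra hne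
    obtain ⟨c, hc, d, hd, hi', hj'⟩ := hsep i hi j hj (fun h => hne (Subtype.ext h))
    exact tableauOfKey_ne μ (hinj i) (hinj j) (c := ⟨c, (μ.mem_cells c).2 hc⟩)
      (d := ⟨d, (μ.mem_cells d).2 hd⟩) hi' hj' (congrArg Subtype.val hij)

namespace YoungDiagram

variable (μ : YoungDiagram)

def blockWidth (t : ℕ) : ℕ := μ.rowLen (2 * t + 1) / 2

/-- The block `(t, b)` consists of the cells `(2t + i, 2b + j)` with `i, j < 2`. -/
def fullBlocks : Finset (ℕ × ℕ) :=
  (range (μ.colLen 0 / 2)).biUnion fun t => {t} ×ˢ range (μ.blockWidth t)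

theorem lt_blockWidth_of_mem_fullBlocks {p : ℕ × ℕ} (hp : p ∈ μ.fullBlocks) :
    p.2 < μ.blockWidth p.1 := by
  simp only [fullBlocks, mem_biUnion, mem_product, mem_singleton, mem_range] at hp
  obtain ⟨t, -, rfl, h⟩ := hp
  exact h

theorem mem_of_lt_blockWidth {t b : ℕ} (hb : b < μ.blockWidth t) :
    (2 * t + 1, 2 * b) ∈ μ ∧ (2 * t, 2 * b + 1) ∈ μ := by
  have := μ.rowLen_anti (2 * t) (2 * t + 1) (by omega)
  unfold blockWidth at hb
  exact ⟨mem_iff_lt_rowLen.2 (by omega), mem_iff_lt_rowLen.2 (by omega)⟩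

theorem card_fullBlocks :
    μ.fullBlocks.card = ∑ t ∈ range (μ.colLen 0 / 2), μ.blockWidth t := by
  rw [fullBlocks, card_biUnion]
  · simp
  · intro s _ t _ hst
    simp [Function.onFun, disjoint_left, hst.symm]

theorem card_eq_sum_rowLen {N : ℕ} (hN : μ.colLen 0 ≤ N) :
    μ.card = ∑ i ∈ range N, μ.rowLen i := by
  rw [YoungDiagram.card, card_eq_sum_card_fiberwise (f := Prod.fst) (t := range N)]
  · simp only [rowLen_eq_card, row]
  · intro c hc
    have := mem_iff_lt_colLen.1 ((μ.mem_cells c).1 hc)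
    have := μ.colLen_anti 0 c.2 (Nat.zero_le _)
    exact mem_range.2 (by omega)

theorem sum_rowLen_le (q : ℕ) :
    ∑ i ∈ range (2 * q + 1), μ.rowLen i ≤
      4 * ∑ t ∈ range q, μ.blockWidth t + μ.rowLen 0 + 2 * q := by
  induction q with
  | zero => simp
  | succ q ih =>
    rw [show 2 * (q + 1) + 1 = 2 * q + 1 + 1 + 1 by ring, sum_range_succ _ (2 * q + 1 + 1),
      sum_range_succ _ (2 * q + 1), sum_range_succ _ q]
    have := μ.rowLen_anti (2 * q + 1) (2 * q + 1 + 1) (by omega)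
    unfold blockWidth at *
    omega

theorem card_le_card_fullBlocks :
    μ.card ≤ 4 * μ.fullBlocks.card + μ.rowLen 0 + μ.colLen 0 := by
  rw [μ.card_eq_sum_rowLen (N := 2 * (μ.colLen 0 / 2) + 1) (by omega), card_fullBlocks]
  have := μ.sum_rowLen_le (μ.colLen 0 / 2)
  omega

/-- Pairs of rows in order; inside a pair, the blocks (those in `A` read by columns, the others by
rows) before the leftover cells. -/
def blockKey (A : Finset (ℕ × ℕ)) (c : ℕ × ℕ) : ℕ ×ₗ ℕ ×ₗ ℕ :=
  if c.2 / 2 < μ.blockWidth (c.1 / 2) then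
    toLex (2 * (c.1 / 2), toLex (c.2 / 2,
      if (c.1 / 2, c.2 / 2) ∈ A then c.1 % 2 + 2 * (c.2 % 2) else 2 * (c.1 % 2) + c.2 % 2))
  else toLex (2 * (c.1 / 2) + 1, toLex (c.1 % 2, c.2))

theorem blockKey_strictMono (A : Finset (ℕ × ℕ)) : StrictMono (μ.blockKey A) := by
  rintro ⟨i, j⟩ ⟨i', j'⟩ h
  obtain ⟨⟨hi, hj⟩, hne⟩ : (i ≤ i' ∧ j ≤ j') ∧ (i, j) ≠ (i', j') := ⟨h.le, h.ne⟩
  simp only [ne_eq, Prod.mk.injEq] at hne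
  unfold blockKey
  rcases (Nat.div_le_div_right (c := 2) hi).lt_or_eq with ht | ht
  · split_ifs <;> simp only [Prod.Lex.toLex_lt_toLex] <;> omega
  rcases (Nat.div_le_div_right (c := 2) hj).lt_or_eq with hb | hb
  · simp only [ht]
    split_ifs <;> simp only [Prod.Lex.toLex_lt_toLex, true_and] <;> omega
  · simp only [ht, hb]
    split_ifs <;> simp only [Prod.Lex.toLex_lt_toLex, true_and] <;> omega

theorem blockKey_injective (A : Finset (ℕ × ℕ)) : Function.Injective (μ.blockKey A) := by
  rintro ⟨i, j⟩ ⟨i', j'⟩ h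
  simp only [blockKey] at h
  obtain ⟨ht, hb⟩ : i / 2 = i' / 2 ∧ j / 2 = j' / 2 := by
    split_ifs at h <;> simp only [toLex_inj, Prod.mk.injEq] at h <;> omega
  rw [ht, hb] at h
  split_ifs at h <;> simp only [toLex_inj, Prod.mk.injEq] at h ⊢ <;> omega

theorem blockKey_swap {A B : Finset (ℕ × ℕ)} {p : ℕ × ℕ} (hp : p.2 < μ.blockWidth p.1)
    (hA : p ∈ A) (hB : p ∉ B) :
    μ.blockKey A (2 * p.1 + 1, 2 * p.2) < μ.blockKey A (2 * p.1, 2 * p.2 + 1) ∧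
      μ.blockKey B (2 * p.1, 2 * p.2 + 1) < μ.blockKey B (2 * p.1 + 1, 2 * p.2) := by
  have h₁ : (2 * p.1 + 1) / 2 = p.1 := by omega
  have h₂ : (2 * p.2 + 1) / 2 = p.2 := by omega
  simp only [blockKey, h₁, h₂, Nat.mul_div_cancel_left _ two_pos, if_pos hp, Prod.mk.eta,
    if_pos hA, if_neg hB, Prod.Lex.toLex_lt_toLex, true_and]
  omega

theorem exists_blockKey_inversion {A B : Finset (ℕ × ℕ)} (hA : A ⊆ μ.fullBlocks)
    (hAB : ¬A ⊆ B) :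
    ∃ c ∈ μ, ∃ d ∈ μ, μ.blockKey A c < μ.blockKey A d ∧ μ.blockKey B d < μ.blockKey B c := by
  obtain ⟨p, hpA, hpB⟩ := not_subset.1 hAB
  have hp := μ.lt_blockWidth_of_mem_fullBlocks (hA hpA)
  obtain ⟨hc, hd⟩ := μ.mem_of_lt_blockWidth hp
  exact ⟨_, hc, _, hd, μ.blockKey_swap hp hpA hpB⟩

theorem two_pow_card_fullBlocks_le_sytCard : 2 ^ μ.fullBlocks.card ≤ sytCard μ := by
  rw [← card_powerset]
  refine card_le_sytCard μ _ μ.blockKey μ.blockKey_injective μ.blockKey_strictMono ?_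
  intro A hA B hB hAB
  rw [mem_powerset] at hA hB
  by_cases hsub : A ⊆ B
  · obtain ⟨c, hc, d, hd, hB', hA'⟩ :=
      μ.exists_blockKey_inversion hB (fun h => hAB (Subset.antisymm hsub h))
    exact ⟨d, hd, c, hc, hA', hB'⟩
  · exact μ.exists_blockKey_inversion hA hsub

end YoungDiagram

theorem stmt_0 :
    ∀ α : ℝ, 0 < α → α < 1 / (2 * Real.exp 1) →
    ∃ β : ℝ, 1 < β ∧ ∃ n₀ : ℕ, ∀ n : ℕ, n₀ ≤ n → ∀ μ : YoungDiagram, μ.card = n →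
      (max (μ.rowLen 0) (μ.colLen 0) : ℝ) < α * n →
      β ^ n ≤ (sytCard μ : ℝ) := by
  intro α _ hαe
  have h2α : 2 * α < 1 := by
    have := (lt_div_iff₀ (by positivity)).1 hαe
    nlinarith [Real.add_one_le_exp 1]
  refine ⟨2 ^ ((1 - 2 * α) / 4), Real.one_lt_rpow (by norm_num) (by linarith), 0,
    fun n _ μ hn hmax => ?_⟩
  have hblocks : (1 - 2 * α) / 4 * n ≤ μ.fullBlocks.card := by
    have hcard : (n : ℝ) ≤ 4 * μ.fullBlocks.card + μ.rowLen 0 + μ.colLen 0 := by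
      exact_mod_cast hn ▸ μ.card_le_card_fullBlocks
    obtain ⟨hrow, hcol⟩ := max_lt_iff.1 hmax
    linarith
  calc (2 ^ ((1 - 2 * α) / 4) : ℝ) ^ n = 2 ^ ((1 - 2 * α) / 4 * n) := by
        rw [← Real.rpow_natCast, ← Real.rpow_mul (by norm_num)]
    _ ≤ 2 ^ (μ.fullBlocks.card : ℝ) := Real.rpow_le_rpow_of_exponent_le (by norm_num) hblocks
    _ = ((2 ^ μ.fullBlocks.card : ℕ) : ℝ) := by push_cast; exact Real.rpow_natCast _ _
    _ ≤ sytCard μ := by exact_mod_cast μ.two_pow_card_fullBlocks_le_sytCard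
end

section
/- For every partition λ of n and every 1 ≤ k ≤ λ₁, the product of the first-row hook lengths satisfies ∏_{j=1}^{λ₁} h_{1,j} ≤ C(n,k) · (λ₁ + ⌊(n - λ₁)/k⌋)!. -/
open Nat

/-!
Write the first-row hooks as `h_{1,j} = (λ₁ - j) + (λ'_j - 1)`. Since the columns weakly
decrease and the cells outside the first row number `n - λ₁`, every column from the `k`-th on
has `λ'_j - 1 ≤ q := ⌊(n - λ₁)/k⌋`, so the last `λ₁ - k + 1` hooks are bounded by the
consecutive integers `λ₁ + q - j` and their product by `(λ₁ + q - k + 1)!`. The first `k - 1`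
hooks are at most `n, n - 1, …`, and `n^{(k-1)} ≤ n^{(k)} = k! C(n,k)` together with
`k! (N - k + 1)! ≤ N!` for `k ≤ N` finishes the bound.
-/

namespace Nat

theorem descFactorial_le_descFactorial_succ {n k : ℕ} (h : k < n) :
    n.descFactorial k ≤ n.descFactorial (k + 1) := by
  rw [descFactorial_succ]
  exact Nat.le_mul_of_pos_left _ (Nat.sub_pos_of_lt h)

theorem descFactorial_le_factorial {n k : ℕ} (h : k ≤ n) : n.descFactorial k ≤ n ! := by
  rw [← factorial_mul_descFactorial h]
  exact Nat.le_mul_of_pos_left _ (factorial_pos _)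

theorem factorial_succ_mul_factorial_sub_le {n k : ℕ} (h : k < n) :
    (k + 1)! * (n - k)! ≤ n ! := by
  have hchoose : k + 1 ≤ n.choose k := by
    simpa only [choose_succ_self_right] using choose_le_choose k (succ_le_of_lt h)
  calc (k + 1)! * (n - k)! = (k + 1) * (k ! * (n - k)!) := by rw [factorial_succ, mul_assoc]
    _ ≤ n.choose k * (k ! * (n - k)!) := Nat.mul_le_mul_right _ hchoose
    _ = n ! := by rw [← mul_assoc, choose_mul_factorial_mul_factorial h.le]

theorem prod_Ico_sub_le_factorial {k m N : ℕ} (h : m ≤ N) :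
    ∏ j ∈ Finset.Ico k m, (N - j) ≤ (N - k)! := by
  calc ∏ j ∈ Finset.Ico k m, (N - j) = (N - k).descFactorial (m - k) := by
        rw [Finset.prod_Ico_eq_prod_range, descFactorial_eq_prod_range]
        exact Finset.prod_congr rfl fun i _ => by omega
    _ ≤ (N - k)! := descFactorial_le_factorial (by omega)

end Nat

namespace YoungDiagram

variable (μ : YoungDiagram)

theorem card_eq_sum_colLen : μ.card = ∑ j ∈ Finset.range (μ.rowLen 0), μ.colLen j := by
  have hcells : μ.cells = (Finset.range (μ.rowLen 0)).biUnion μ.col := by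
    ext ⟨i, j⟩
    simp only [Finset.mem_biUnion, Finset.mem_range, mem_col_iff, mem_cells]
    constructor
    · intro h
      exact ⟨j, (mem_iff_lt_rowLen.mp h).trans_le (μ.rowLen_anti 0 i i.zero_le), h, rfl⟩
    · rintro ⟨_, _, hmem, rfl⟩
      exact hmem
  rw [YoungDiagram.card, hcells, Finset.card_biUnion]
  · exact Finset.sum_congr rfl fun j _ => μ.colLen_eq_card.symm
  · intro a _ b _ hab
    refine Finset.disjoint_left.mpr fun c hca hcb => hab ?_
    rw [mem_col_iff] at hca hcb
    exact hca.2.symm.trans hcb.2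

theorem rowLen_le_card (i : ℕ) : μ.rowLen i ≤ μ.card := by
  rw [rowLen_eq_card]
  exact Finset.card_filter_le _ _

theorem one_le_colLen {j : ℕ} (hj : j < μ.rowLen 0) : 1 ≤ μ.colLen j :=
  mem_iff_lt_colLen.mp (mem_iff_lt_rowLen.mpr hj)

theorem sum_colLen_sub_one :
    ∑ j ∈ Finset.range (μ.rowLen 0), (μ.colLen j - 1) = μ.card - μ.rowLen 0 := by
  have h : ∑ j ∈ Finset.range (μ.rowLen 0), (μ.colLen j - 1 + 1) = μ.card := by
    rw [card_eq_sum_colLen]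
    exact Finset.sum_congr rfl fun j hj =>
      Nat.sub_add_cancel (μ.one_le_colLen (Finset.mem_range.mp hj))
  rw [Finset.sum_add_distrib, Finset.sum_const, Finset.card_range, smul_eq_mul, mul_one] at h
  omega

theorem succ_mul_colLen_sub_one_le {j : ℕ} (hj : j < μ.rowLen 0) :
    (j + 1) * (μ.colLen j - 1) ≤ μ.card - μ.rowLen 0 := by
  calc (j + 1) * (μ.colLen j - 1) = ∑ _i ∈ Finset.range (j + 1), (μ.colLen j - 1) := by
        rw [Finset.sum_const, Finset.card_range, smul_eq_mul]
    _ ≤ ∑ i ∈ Finset.range (j + 1), (μ.colLen i - 1) :=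
        Finset.sum_le_sum fun i hi =>
          Nat.sub_le_sub_right (μ.colLen_anti i j (Nat.lt_succ_iff.mp (Finset.mem_range.mp hi))) 1
    _ ≤ ∑ i ∈ Finset.range (μ.rowLen 0), (μ.colLen i - 1) :=
        Finset.sum_le_sum_of_subset (Finset.range_subset_range.mpr hj)
    _ = μ.card - μ.rowLen 0 := μ.sum_colLen_sub_one

theorem hook_zero_eq {j : ℕ} (hj : j < μ.rowLen 0) :
    hook μ 0 j = (μ.rowLen 0 - j) + (μ.colLen j - 1) := by
  have := μ.one_le_colLen hj
  unfold hook
  omega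

theorem hook_zero_le_card_sub {j : ℕ} (hj : j < μ.rowLen 0) : hook μ 0 j ≤ μ.card - j := by
  have hcol := (Nat.le_mul_of_pos_left _ j.succ_pos).trans (μ.succ_mul_colLen_sub_one_le hj)
  have hrow := μ.rowLen_le_card 0
  rw [μ.hook_zero_eq hj]
  omega

theorem hook_zero_le_of_le {j k : ℕ} (hk : 0 < k) (hkj : k ≤ j + 1) (hj : j < μ.rowLen 0) :
    hook μ 0 j ≤ μ.rowLen 0 + (μ.card - μ.rowLen 0) / k - j := by
  have hcol : μ.colLen j - 1 ≤ (μ.card - μ.rowLen 0) / k := by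
    rw [Nat.le_div_iff_mul_le hk, mul_comm]
    exact (Nat.mul_le_mul_right _ hkj).trans (μ.succ_mul_colLen_sub_one_le hj)
  rw [μ.hook_zero_eq hj]
  omega

theorem prod_hook_zero_le {k : ℕ} (hk : k < μ.rowLen 0) :
    ∏ j ∈ Finset.range (μ.rowLen 0), hook μ 0 j ≤
      μ.card.descFactorial k * (μ.rowLen 0 + (μ.card - μ.rowLen 0) / (k + 1) - k)! := by
  rw [← Finset.prod_range_mul_prod_Ico _ hk.le, Nat.descFactorial_eq_prod_range]
  refine Nat.mul_le_mul ?_ ?_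
  · exact Finset.prod_le_prod' fun j hj =>
      μ.hook_zero_le_card_sub ((Finset.mem_range.mp hj).trans hk)
  · calc ∏ j ∈ Finset.Ico k (μ.rowLen 0), hook μ 0 j
        ≤ ∏ j ∈ Finset.Ico k (μ.rowLen 0),
            (μ.rowLen 0 + (μ.card - μ.rowLen 0) / (k + 1) - j) :=
          Finset.prod_le_prod' fun j hj => by
            obtain ⟨hkj, hj⟩ := Finset.mem_Ico.mp hj
            exact μ.hook_zero_le_of_le k.succ_pos (Nat.succ_le_succ hkj) hj
      _ ≤ _ := Nat.prod_Ico_sub_le_factorial (Nat.le_add_right _ _)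

end YoungDiagram

theorem stmt_3 (μ : YoungDiagram) (n k : ℕ) (hn : μ.card = n)
    (hk1 : 1 ≤ k) (hk2 : k ≤ μ.rowLen 0) :
    ∏ j ∈ Finset.range (μ.rowLen 0), hook μ 0 j ≤
      n.choose k * (μ.rowLen 0 + (n - μ.rowLen 0) / k) ! := by
  obtain ⟨k, rfl⟩ : ∃ k', k = k' + 1 := ⟨k - 1, by omega⟩
  subst hn
  have hrow := μ.rowLen_le_card 0
  set m := μ.rowLen 0
  set q := (μ.card - m) / (k + 1)
  calc ∏ j ∈ Finset.range m, hook μ 0 j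
      ≤ μ.card.descFactorial k * (m + q - k)! := μ.prod_hook_zero_le hk2
    _ ≤ μ.card.descFactorial (k + 1) * (m + q - k)! :=
        Nat.mul_le_mul_right _ (Nat.descFactorial_le_descFactorial_succ (by omega))
    _ = μ.card.choose (k + 1) * ((k + 1)! * (m + q - k)!) := by
        rw [Nat.descFactorial_eq_factorial_mul_choose]
        ring
    _ ≤ μ.card.choose (k + 1) * (m + q)! :=
        Nat.mul_le_mul_left _
          (Nat.factorial_succ_mul_factorial_sub_le (Nat.lt_of_lt_of_le hk2 (Nat.le_add_right m q)))
end
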